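/- Series connection of Prandtl stops is a stop: let k ≥ 1, a_1, …, a_k > 0, ρ_1, …, ρ_k > 0, and r_i = a_i ρ_i. Let g : [0,T] → ℝ be absolutely continuous with g(0) = 0, and suppose ε_1, …, ε_k and e_1, …, e_k are absolutely continuous on [0,T] with ε_i(0) = e_i(0) = 0, Σ_{i=1}^{k} ε_i(t) = g(t) for all t, each e_i is the stop operator output with threshold ρ_i and input ε_i, and the stresses coincide: a_i e_i(t) = a_j e_j(t) for all i, j and all t. Define ã = (Σ_{i=1}^{k} 1/a_i)^{−1}, r̃ = min_i r_i, and ρ̃ = r̃/ã. Then the common stress σ(t) = a_1 e_1(t) satisfies σ(t) = ã e(t), where e = σ/ã is the stop operator output with threshold ρ̃ and input g; that is, e is absolutely continuous, e(0) = 0, |e(t)| ≤ ρ̃ for all t, and (g'(t) − e'(t))(e(t) − z) ≥ 0 for a.e. t and every z ∈ [−ρ̃, ρ̃]. -/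

import Mathlib

/-!
Write `σ = a_i e_i` for the common stress and `S = ∑ 1/a_i`. Then `σ S = ∑ e_i`, which is absolutely
continuous with derivative `g' - ∑ (ε_i' - e_i')` because `∑ ε_i = g`. For the variational
inequality, `ε_i' - e_i'` lies in the normal cone of `[-ρ_i, ρ_i]` at `e_i`; scaling by `S a_i`
puts it in the normal cone of `[-S a_i ρ_i, S a_i ρ_i] ⊇ [-S r̃, S r̃]` at the common point `σ S`,
and normal cones to a fixed set at a fixed point are closed under sums.
-/

open MeasureTheory Set

noncomputable section

/-- Outward normal cone to a convex set `Z` at `z`. -/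
def normalCone {V : Type*} [NormedAddCommGroup V] [InnerProductSpace ℝ V]
    (Z : Set V) (z : V) : Set V :=
  {y | ∀ z' ∈ Z, 0 ≤ (inner ℝ y (z - z') : ℝ)}

/-- `u` is absolutely continuous on `[0,T]` with a.e. derivative `u'`
(encoded via the integral representation). -/
def IsACOn {W : Type*} [NormedAddCommGroup W] [NormedSpace ℝ W]
    (T : ℝ) (u u' : ℝ → W) : Prop :=
  IntervalIntegrable u' volume 0 T ∧
    ∀ t ∈ Icc (0 : ℝ) T, u t = u 0 + ∫ s in (0:ℝ)..t, u' s

/-- Solution of the multidimensional stop inclusion on `[0,T]` with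
characteristic convex set `Z`, direction `f0`, and an input whose a.e.
derivative is `g'`. -/
def IsStopSol {V : Type*} [NormedAddCommGroup V] [InnerProductSpace ℝ V]
    (Z : Set V) (f0 : V) (T : ℝ) (g' : ℝ → ℝ) (u u' : ℝ → V) : Prop :=
  IsACOn T u u' ∧ u 0 = 0 ∧ (∀ t ∈ Icc (0 : ℝ) T, u t ∈ Z) ∧
    ∀ᵐ t ∂(volume.restrict (Icc (0 : ℝ) T)),
      -u' t + g' t • f0 ∈ normalCone Z (u t)

/-- A face of a polytope `Z`: `Z` itself or the intersection of `Z` with a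
supporting hyperplane. -/
def IsPolyFace {V : Type*} [NormedAddCommGroup V] [InnerProductSpace ℝ V]
    (Z F : Set V) : Prop :=
  F = Z ∨ ∃ (n : V) (cc : ℝ), (∀ x ∈ Z, (inner ℝ n x : ℝ) ≤ cc) ∧
    F = {x ∈ Z | (inner ℝ n x : ℝ) = cc}

/-- Output `e` of the one-dimensional stop operator with threshold `ρ` on
`[0,T]`, for an input with a.e. derivative `ε'`. -/
def IsStopOutput (ρ T : ℝ) (ε' e e' : ℝ → ℝ) : Prop :=
  IsACOn T e e' ∧ e 0 = 0 ∧ (∀ t ∈ Icc (0 : ℝ) T, |e t| ≤ ρ) ∧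
    ∀ᵐ t ∂(volume.restrict (Icc (0 : ℝ) T)),
      ∀ z ∈ Icc (-ρ) ρ, 0 ≤ (ε' t - e' t) * (e t - z)

open scoped Pointwise

namespace IsACOn

variable {W : Type*} [NormedAddCommGroup W] [NormedSpace ℝ W] {T : ℝ}

theorem intervalIntegrable_of_mem {u u' : ℝ → W} (hu : IsACOn T u u') {t : ℝ}
    (ht : t ∈ Icc 0 T) : IntervalIntegrable u' volume 0 t :=
  hu.1.mono_set <| by
    rw [uIcc_of_le ht.1, uIcc_of_le (ht.1.trans ht.2)]
    exact Icc_subset_Icc le_rfl ht.2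

theorem sub {u u' v v' : ℝ → W} (hu : IsACOn T u u') (hv : IsACOn T v v') :
    IsACOn T (fun t => u t - v t) (fun t => u' t - v' t) := by
  refine ⟨hu.1.sub hv.1, fun t ht => ?_⟩
  beta_reduce
  rw [intervalIntegral.integral_sub (hu.intervalIntegrable_of_mem ht)
    (hv.intervalIntegrable_of_mem ht), hu.2 t ht, hv.2 t ht]
  abel

theorem sum {ι : Type*} (s : Finset ι) {u u' : ι → ℝ → W}
    (hu : ∀ i ∈ s, IsACOn T (u i) (u' i)) :
    IsACOn T (fun t => ∑ i ∈ s, u i t) (fun t => ∑ i ∈ s, u' i t) := by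
  refine ⟨?_, fun t ht => ?_⟩
  · simpa only [Finset.sum_fn] using IntervalIntegrable.sum s fun i hi => (hu i hi).1
  · rw [intervalIntegral.integral_finsetSum fun i hi => (hu i hi).intervalIntegrable_of_mem ht,
      ← Finset.sum_add_distrib]
    exact Finset.sum_congr rfl fun i hi => (hu i hi).2 t ht

theorem congr {u v u' : ℝ → W} (hu : IsACOn T u u') (h0 : u 0 = v 0) (h : EqOn u v (Icc 0 T)) :
    IsACOn T v u' :=
  ⟨hu.1, fun t ht => by rw [← h ht, ← h0]; exact hu.2 t ht⟩

end IsACOn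

section NormalCone

variable {V : Type*} [NormedAddCommGroup V] [InnerProductSpace ℝ V]

theorem normalCone_anti {Z Z' : Set V} (hZ : Z' ⊆ Z) (z : V) :
    normalCone Z z ⊆ normalCone Z' z :=
  fun _ hy z' hz' => hy z' (hZ hz')

theorem smul_mem_normalCone_smul {Z : Set V} {y z : V} (hy : y ∈ normalCone Z z) {c : ℝ}
    (hc : 0 ≤ c) : y ∈ normalCone (c • Z) (c • z) := by
  rintro _ ⟨w, hw, rfl⟩
  rw [← smul_sub, inner_smul_right]
  exact mul_nonneg hc (hy w hw)

theorem sum_mem_normalCone {ι : Type*} (s : Finset ι) {Z : Set V} {z : V} {y : ι → V}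
    (hy : ∀ i ∈ s, y i ∈ normalCone Z z) : ∑ i ∈ s, y i ∈ normalCone Z z := by
  intro z' hz'
  rw [sum_inner]
  exact Finset.sum_nonneg fun i hi => hy i hi z' hz'

theorem mem_normalCone_Icc_iff {ρ x e : ℝ} :
    x ∈ normalCone (Icc (-ρ) ρ) e ↔ ∀ z ∈ Icc (-ρ) ρ, 0 ≤ x * (e - z) := by
  simp only [normalCone, mem_ofPred_eq, Real.inner_apply]

theorem mem_normalCone_Icc_mul {ρ x e c : ℝ} (hx : x ∈ normalCone (Icc (-ρ) ρ) e) (hc : 0 < c) :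
    x ∈ normalCone (Icc (-(c * ρ)) (c * ρ)) (c * e) := by
  simpa only [LinearOrderedField.smul_Icc hc, mul_neg, smul_eq_mul]
    using smul_mem_normalCone_smul hx hc.le

end NormalCone

section SeriesConnection

variable {ι : Type*} (s : Finset ι) {a ρ e x : ι → ℝ} {σ r : ℝ}

theorem abs_le_inf'_of_mul_eq (hs : s.Nonempty) (ha : ∀ i ∈ s, 0 ≤ a i)
    (he : ∀ i ∈ s, a i * e i = σ) (hρ : ∀ i ∈ s, |e i| ≤ ρ i) :
    |σ| ≤ s.inf' hs fun i => a i * ρ i :=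
  Finset.le_inf' hs _ fun i hi => by
    rw [← he i hi, abs_mul, abs_of_nonneg (ha i hi)]
    exact mul_le_mul_of_nonneg_left (hρ i hi) (ha i hi)

theorem sum_mul_inv_eq_of_mul_eq (ha : ∀ i ∈ s, 0 < a i) (he : ∀ i ∈ s, a i * e i = σ) :
    ∑ i ∈ s, e i = σ * ∑ i ∈ s, (a i)⁻¹ := by
  rw [Finset.mul_sum]
  refine Finset.sum_congr rfl fun i hi => ?_
  rw [← he i hi]
  field_simp [(ha i hi).ne']

theorem sum_mem_normalCone_series (ha : ∀ i ∈ s, 0 < a i) (he : ∀ i ∈ s, a i * e i = σ)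
    (hr : ∀ i ∈ s, r ≤ a i * ρ i) (hx : ∀ i ∈ s, x i ∈ normalCone (Icc (-ρ i) (ρ i)) (e i)) :
    ∑ i ∈ s, x i ∈
      normalCone (Icc (-(r * ∑ i ∈ s, (a i)⁻¹)) (r * ∑ i ∈ s, (a i)⁻¹))
        (σ * ∑ i ∈ s, (a i)⁻¹) := by
  set S := ∑ i ∈ s, (a i)⁻¹
  refine sum_mem_normalCone s fun i hi => ?_
  have hS : 0 < S := (inv_pos.2 (ha i hi)).trans_le <|
    Finset.single_le_sum (fun j hj => (inv_pos.2 (ha j hj)).le) hi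
  have hscaled := mem_normalCone_Icc_mul (hx i hi) (mul_pos hS (ha i hi))
  rw [mul_assoc S (a i) (e i), he i hi, mul_comm S σ] at hscaled
  have hrS : r * S ≤ S * a i * ρ i := by
    rw [mul_comm r, mul_assoc]
    exact mul_le_mul_of_nonneg_left (hr i hi) hS.le
  exact normalCone_anti (Icc_subset_Icc (neg_le_neg hrS) hrS) _ hscaled

end SeriesConnection

theorem series_connection_is_stop_general
    (k : ℕ) (hk : 1 ≤ k)
    (a ρ : Fin k → ℝ) (ha : ∀ i, 0 < a i)
    (T : ℝ)
    (g g' : ℝ → ℝ) (hg : IsACOn T g g') (hg0 : g 0 = 0)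
    (ε ε' e e' : Fin k → ℝ → ℝ)
    (hε0 : ∀ i, ε i 0 = 0) (he0 : ∀ i, e i 0 = 0)
    (hεac : ∀ i, IsACOn T (ε i) (ε' i))
    (hsum : ∀ t ∈ Icc (0 : ℝ) T, ∑ i, ε i t = g t)
    (hstop : ∀ i, IsStopOutput (ρ i) T (ε' i) (e i) (e' i))
    (hstress : ∀ i j : Fin k, ∀ t ∈ Icc (0 : ℝ) T, a i * e i t = a j * e j t) :
    ∃ E' : ℝ → ℝ,
      IsStopOutput
        ((Finset.univ.inf' ⟨⟨0, hk⟩, Finset.mem_univ _⟩ fun i : Fin k => a i * ρ i) /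
          (∑ i, (a i)⁻¹)⁻¹)
        T g'
        (fun t => a ⟨0, hk⟩ * e ⟨0, hk⟩ t / (∑ i, (a i)⁻¹)⁻¹) E' := by
  set i₀ : Fin k := ⟨0, hk⟩
  have hS : 0 < ∑ i, (a i)⁻¹ :=
    Finset.sum_pos (fun i _ => inv_pos.2 (ha i)) ⟨i₀, Finset.mem_univ _⟩
  have hσ : ∀ t ∈ Icc (0 : ℝ) T, ∀ i ∈ Finset.univ, a i * e i t = a i₀ * e i₀ t :=
    fun t ht i _ => hstress i i₀ t ht
  refine ⟨fun t => g' t - ∑ i, (ε' i t - e' i t), ?_, by simp [he0], fun t ht => ?_, ?_⟩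
  · refine (hg.sub (IsACOn.sum _ fun i _ => (hεac i).sub (hstop i).1)).congr
      (by simp [hg0, hε0, he0]) fun t ht => ?_
    beta_reduce
    rw [div_inv_eq_mul, ← sum_mul_inv_eq_of_mul_eq _ (fun i _ => ha i) (hσ t ht), ← hsum t ht,
      Finset.sum_sub_distrib, sub_sub_cancel]
  · beta_reduce
    rw [div_inv_eq_mul, div_inv_eq_mul, abs_mul, abs_of_pos hS]
    exact mul_le_mul_of_nonneg_right (abs_le_inf'_of_mul_eq _ _ (fun i _ => (ha i).le)
      (hσ t ht) fun i _ => (hstop i).2.2.1 t ht) hS.le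
  · filter_upwards [ae_restrict_mem measurableSet_Icc, ae_all_iff.2 fun i => (hstop i).2.2.2]
      with t ht hineq
    rw [← mem_normalCone_Icc_iff, div_inv_eq_mul, div_inv_eq_mul, sub_sub_cancel]
    exact sum_mem_normalCone_series _ (fun i _ => ha i) (hσ t ht)
      (fun i _ => Finset.inf'_le _ (Finset.mem_univ i))
      fun i _ => mem_normalCone_Icc_iff.2 (hineq i)

/-- A series connection of Prandtl stops is a single stop: if the elongations
of `k` stops add up to `g` and all stresses coincide, then the common stress
divided by the effective stiffness `ã = (∑ 1/a_i)⁻¹` is the output of the stop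
operator with threshold `ρ̃ = r̃/ã`, `r̃ = min_i a_i ρ_i`, and input `g`. -/
theorem series_connection_is_stop
    (k : ℕ) (hk : 1 ≤ k)
    (a ρ : Fin k → ℝ) (ha : ∀ i, 0 < a i) (hρ : ∀ i, 0 < ρ i)
    (T : ℝ) (hT : 0 < T)
    (g g' : ℝ → ℝ) (hg : IsACOn T g g') (hg0 : g 0 = 0)
    (ε ε' e e' : Fin k → ℝ → ℝ)
    (hε0 : ∀ i, ε i 0 = 0) (he0 : ∀ i, e i 0 = 0)
    (hεac : ∀ i, IsACOn T (ε i) (ε' i))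
    (hsum : ∀ t ∈ Icc (0 : ℝ) T, ∑ i, ε i t = g t)
    (hstop : ∀ i, IsStopOutput (ρ i) T (ε' i) (e i) (e' i))
    (hstress : ∀ i j : Fin k, ∀ t ∈ Icc (0 : ℝ) T, a i * e i t = a j * e j t) :
    ∃ E' : ℝ → ℝ,
      IsStopOutput
        ((Finset.univ.inf' ⟨⟨0, hk⟩, Finset.mem_univ _⟩ fun i : Fin k => a i * ρ i) /
          (∑ i, (a i)⁻¹)⁻¹)
        T g'
        (fun t => a ⟨0, hk⟩ * e ⟨0, hk⟩ t / (∑ i, (a i)⁻¹)⁻¹) E' :=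
  series_connection_is_stop_general k hk a ρ ha T g g' hg hg0 ε ε' e e' hε0 he0 hεac hsum hstop
    hstress

end
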